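/- arXiv:1806.06396 — 3 statements merged into one kernel-verified Lean document; each statement's English description precedes it below -/
import Mathlib

section
/- Let H ≥ 0, γ₀ > 0, P_peak > 0, 0 < P̄ < P_peak, v_max > 0, d_t > 0, N ∈ ℕ, K ∈ ℕ, and fix initial/final points (x[0],y[0]), (x[N+1],y[N+1]) ∈ ℝ², estimated eavesdropper locations (x_{E_k}, y_{E_k}) ∈ ℝ² and uncertainty radii Q_k ≥ 0 for k = 1,…,K. For a trajectory (x,y) ∈ ℝ^N × ℝ^N and power vector P ∈ ℝ^N, say (x,y,P) is feasible if (x[n+1]−x[n])² + (y[n+1]−y[n])² ≤ (v_max d_t)² for all n = 0,…,N, 0 ≤ P[n] ≤ P_peak for all n, and (1/N)·Σ_{n=1}^N P[n] ≤ P̄. For each n define f_n(x,y,P[n]) = log₂(1 + γ₀P[n]/(x[n]² + y[n]² + H²)) − max_{1≤k≤K} max_{(Δx,Δy): Δx²+Δy²≤Q_k²} log₂(1 + γ₀P[n]/((x[n]−x_{E_k}−Δx)² + (y[n]−y_{E_k}−Δy)² + H²)). Then the supremum of Σ_{n=1}^N max(f_n(x,y,P[n]), 0) over all feasible (x,y,P)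 equals the supremum of Σ_{n=1}^N f_n(x,y,P[n]) over all feasible (x,y,P). -/
/-- Auxiliary: with zero power, each term of the secrecy rate is zero. -/
lemma aux_zero_power (γ₀ a b H : ℝ) (K : ℕ) (xE yE Q : Fin K → ℝ)
    (hQ : ∀ k, 0 ≤ Q k) :
    Real.logb 2 (1 + γ₀ * 0 / (a ^ 2 + b ^ 2 + H ^ 2)) -
      sSup {r : ℝ | ∃ k : Fin K, ∃ Δx Δy : ℝ, Δx ^ 2 + Δy ^ 2 ≤ (Q k) ^ 2 ∧
        r = Real.logb 2 (1 + γ₀ * 0 /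
          ((a - xE k - Δx) ^ 2 + (b - yE k - Δy) ^ 2 + H ^ 2))} = 0 := by
  have h1 : Real.logb 2 (1 + γ₀ * 0 / (a ^ 2 + b ^ 2 + H ^ 2)) = 0 := by
    simp
  rw [h1]
  have h2 : sSup {r : ℝ | ∃ k : Fin K, ∃ Δx Δy : ℝ, Δx ^ 2 + Δy ^ 2 ≤ (Q k) ^ 2 ∧
      r = Real.logb 2 (1 + γ₀ * 0 /
        ((a - xE k - Δx) ^ 2 + (b - yE k - Δy) ^ 2 + H ^ 2))} = 0 := by
    rcases Nat.eq_zero_or_pos K with hK | hK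
    · have : {r : ℝ | ∃ k : Fin K, ∃ Δx Δy : ℝ, Δx ^ 2 + Δy ^ 2 ≤ (Q k) ^ 2 ∧
          r = Real.logb 2 (1 + γ₀ * 0 /
            ((a - xE k - Δx) ^ 2 + (b - yE k - Δy) ^ 2 + H ^ 2))} = ∅ := by
        ext r
        simp only [Set.mem_setOf_eq, Set.mem_empty_iff_false, iff_false]
        rintro ⟨k, _⟩
        exact absurd k.2 (by omega)
      rw [this, Real.sSup_empty]
    · have : {r : ℝ | ∃ k : Fin K, ∃ Δx Δy : ℝ, Δx ^ 2 + Δy ^ 2 ≤ (Q k) ^ 2 ∧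
          r = Real.logb 2 (1 + γ₀ * 0 /
            ((a - xE k - Δx) ^ 2 + (b - yE k - Δy) ^ 2 + H ^ 2))} = {0} := by
        ext r
        simp only [Set.mem_setOf_eq, Set.mem_singleton_iff]
        constructor
        · rintro ⟨k, Δx, Δy, _, rfl⟩
          simp
        · rintro rfl
          exact ⟨⟨0, hK⟩, 0, 0, by simpa using sq_nonneg (Q ⟨0, hK⟩), by simp⟩
      rw [this, csSup_singleton]
  rw [h2]
  ring

/-- Lemma 1 of the paper: the supremum of the average worst-case secrecy rate
objective with the `[·]⁺ = max(·,0)` operator over all feasible trajectories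
and power allocations equals the supremum of the same objective with the
`[·]⁺` operator removed. -/
theorem stmt_0 (H γ₀ Ppeak Pbar vmax dt : ℝ) (N K : ℕ)
    (hH : 0 ≤ H) (hγ : 0 < γ₀) (hPpeak : 0 < Ppeak)
    (hPbar0 : 0 < Pbar) (hPbarPk : Pbar < Ppeak)
    (hv : 0 < vmax) (hdt : 0 < dt)
    (xI yI xF yF : ℝ) (xE yE : Fin K → ℝ) (Q : Fin K → ℝ) (hQ : ∀ k, 0 ≤ Q k) :
    sSup {S : ℝ | ∃ x y P : ℕ → ℝ,
        (x 0 = xI ∧ y 0 = yI ∧ x (N + 1) = xF ∧ y (N + 1) = yF) ∧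
        (∀ n ≤ N, (x (n + 1) - x n) ^ 2 + (y (n + 1) - y n) ^ 2 ≤ (vmax * dt) ^ 2) ∧
        (∀ n ∈ Finset.Icc 1 N, 0 ≤ P n ∧ P n ≤ Ppeak) ∧
        (1 / (N : ℝ)) * ∑ n ∈ Finset.Icc 1 N, P n ≤ Pbar ∧
        S = ∑ n ∈ Finset.Icc 1 N,
          max (Real.logb 2 (1 + γ₀ * P n / ((x n) ^ 2 + (y n) ^ 2 + H ^ 2)) -
            sSup {r : ℝ | ∃ k : Fin K, ∃ Δx Δy : ℝ, Δx ^ 2 + Δy ^ 2 ≤ (Q k) ^ 2 ∧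
              r = Real.logb 2 (1 + γ₀ * P n /
                ((x n - xE k - Δx) ^ 2 + (y n - yE k - Δy) ^ 2 + H ^ 2))}) 0} =
    sSup {S : ℝ | ∃ x y P : ℕ → ℝ,
        (x 0 = xI ∧ y 0 = yI ∧ x (N + 1) = xF ∧ y (N + 1) = yF) ∧
        (∀ n ≤ N, (x (n + 1) - x n) ^ 2 + (y (n + 1) - y n) ^ 2 ≤ (vmax * dt) ^ 2) ∧
        (∀ n ∈ Finset.Icc 1 N, 0 ≤ P n ∧ P n ≤ Ppeak) ∧
        (1 / (N : ℝ)) * ∑ n ∈ Finset.Icc 1 N, P n ≤ Pbar ∧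
        S = ∑ n ∈ Finset.Icc 1 N,
          (Real.logb 2 (1 + γ₀ * P n / ((x n) ^ 2 + (y n) ^ 2 + H ^ 2)) -
            sSup {r : ℝ | ∃ k : Fin K, ∃ Δx Δy : ℝ, Δx ^ 2 + Δy ^ 2 ≤ (Q k) ^ 2 ∧
              r = Real.logb 2 (1 + γ₀ * P n /
                ((x n - xE k - Δx) ^ 2 + (y n - yE k - Δy) ^ 2 + H ^ 2))})} := by
  classical
  apply csSup_eq_csSup_of_forall_exists_le
  · -- every element of the [·]⁺ problem is matched in the plain problem
    rintro S ⟨x, y, P, hfix, hvel, hP, havg, rfl⟩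
    -- the per-step objective with power p
    set F : ℕ → ℝ → ℝ := fun n p =>
      Real.logb 2 (1 + γ₀ * p / ((x n) ^ 2 + (y n) ^ 2 + H ^ 2)) -
        sSup {r : ℝ | ∃ k : Fin K, ∃ Δx Δy : ℝ, Δx ^ 2 + Δy ^ 2 ≤ (Q k) ^ 2 ∧
          r = Real.logb 2 (1 + γ₀ * p /
            ((x n - xE k - Δx) ^ 2 + (y n - yE k - Δy) ^ 2 + H ^ 2))} with hF
    set P' : ℕ → ℝ := fun n => if 0 ≤ F n (P n) then P n else 0 with hP'
    have hF0 : ∀ n, F n 0 = 0 := fun n =>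
      aux_zero_power γ₀ (x n) (y n) H K xE yE Q hQ
    have hterm : ∀ n, F n (P' n) = max (F n (P n)) 0 := by
      intro n
      by_cases h : 0 ≤ F n (P n)
      · simp [hP', h, max_eq_left h]
      · simp only [hP', if_neg h]
        rw [hF0 n, max_eq_right (le_of_not_ge h)]
    refine ⟨∑ n ∈ Finset.Icc 1 N, F n (P' n), ⟨x, y, P', hfix, hvel, ?_, ?_, rfl⟩, ?_⟩
    · intro n hn
      rcases hP n hn with ⟨h0, h1⟩
      by_cases h : 0 ≤ F n (P n) <;> simp [hP', h, h0, h1, le_of_lt hPpeak]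
    · refine le_trans ?_ havg
      apply mul_le_mul_of_nonneg_left _ (by positivity)
      apply Finset.sum_le_sum
      intro n hn
      by_cases h : 0 ≤ F n (P n) <;> simp [hP', h, (hP n hn).1]
    · apply le_of_eq
      exact Finset.sum_congr rfl fun n _ => (hterm n).symm
  · -- every element of the plain problem is dominated by one of the [·]⁺ problem
    rintro S ⟨x, y, P, hfix, hvel, hP, havg, rfl⟩
    refine ⟨_, ⟨x, y, P, hfix, hvel, hP, havg, rfl⟩, ?_⟩
    exact Finset.sum_le_sum fun n _ => le_max_left _ _
end

section
/- Let α > β > 0, λ > 0, and P_peak > 0. Define P̂ = √((1/(2β) − 1/(2α))² + (1/β − 1/α)/(λ ln 2)) − 1/(2β) − 1/(2α) and P* = min(max(P̂, 0), P_peak). Then P* maximizes the function P ↦ log₂(1 + αP) − log₂(1 + βP) − λP over the interval [0, P_peak]. -/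
/-!
With `m = 1/(2β) + 1/(2α)` and `d = 1/(2β) - 1/(2α)` one has
`(1 + αP)(1 + βP) = αβ((P + m)² - d²)`, so the derivative
`(α - β)/((1 + αP)(1 + βP) ln 2) - λ` of the Lagrangian equals
`λαβ(D - (P + m)²)/((1 + αP)(1 + βP))`, where `D` is the radicand of `P̂ = √D - m`.
For `P ≥ 0` it therefore has the sign of `P̂ - P`: the Lagrangian increases up to `P̂` and
decreases afterwards, so on `[0, P_peak]` it is maximal at the clipped point.
-/

open Set Real

theorem isMaxOn_Icc_min_max_of_hasDerivAt_sign {f f' : ℝ → ℝ} {a b c : ℝ} (hab : a ≤ b)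
    (hf : ∀ x ∈ Icc a b, HasDerivAt f (f' x) x)
    (hinc : ∀ x ∈ Ioo a b, x < c → 0 ≤ f' x)
    (hdec : ∀ x ∈ Ioo a b, c < x → f' x ≤ 0) :
    min (max c a) b ∈ Icc a b ∧ IsMaxOn f (Icc a b) (min (max c a) b) := by
  set p := min (max c a) b
  have hap : a ≤ p := le_min (le_max_right c a) hab
  have hpb : p ≤ b := min_le_right _ _
  have hcont : ContinuousOn f (Icc a b) := fun x hx => (hf x hx).continuousAt.continuousWithinAt
  have hmono : MonotoneOn f (Icc a p) := by
    refine monotoneOn_of_hasDerivWithinAt_nonneg (f' := f') (convex_Icc a p)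
      (hcont.mono (Icc_subset_Icc_right hpb)) ?_ ?_ <;> rw [interior_Icc] <;> intro x hx
    · exact (hf x ⟨hx.1.le, hx.2.le.trans hpb⟩).hasDerivWithinAt
    · have hxc : x < c := (lt_max_iff.mp (lt_min_iff.mp hx.2).1).resolve_right hx.1.le.not_gt
      exact hinc x ⟨hx.1, hx.2.trans_le hpb⟩ hxc
  have hanti : AntitoneOn f (Icc p b) := by
    refine antitoneOn_of_hasDerivWithinAt_nonpos (f' := f') (convex_Icc p b)
      (hcont.mono (Icc_subset_Icc_left hap)) ?_ ?_ <;> rw [interior_Icc] <;> intro x hx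
    · exact (hf x ⟨hap.trans hx.1.le, hx.2.le⟩).hasDerivWithinAt
    · have hcx : c < x :=
        (le_max_left c a).trans_lt ((min_lt_iff.mp hx.1).resolve_right hx.2.le.not_gt)
      exact hdec x ⟨hap.trans_lt hx.1, hx.2⟩ hcx
  refine ⟨⟨hap, hpb⟩, fun x hx => ?_⟩
  rcases le_total x p with h | h
  · exact hmono ⟨hx.1, h⟩ ⟨hap, le_rfl⟩ h
  · exact hanti ⟨le_rfl, hpb⟩ ⟨h, hx.2⟩ h

noncomputable def secrecyLagrangian (α β lam P : ℝ) : ℝ :=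
  logb 2 (1 + α * P) - logb 2 (1 + β * P) - lam * P

theorem hasDerivAt_secrecyLagrangian {α β lam P : ℝ} (hα : 1 + α * P ≠ 0)
    (hβ : 1 + β * P ≠ 0) :
    HasDerivAt (secrecyLagrangian α β lam)
      (α / ((1 + α * P) * log 2) - β / ((1 + β * P) * log 2) - lam) P := by
  have hlogb : ∀ γ : ℝ, 1 + γ * P ≠ 0 →
      HasDerivAt (fun P => logb 2 (1 + γ * P)) (γ / ((1 + γ * P) * log 2)) P := fun γ hγ => by
    simpa only [logb, div_div] using
      (((hasDerivAt_const_mul γ).const_add 1).log hγ).div_const (log 2)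
  exact ((hlogb α hα).sub (hlogb β hβ)).sub (hasDerivAt_const_mul lam)

section DerivSign

variable {α β lam x : ℝ}

theorem secrecyLagrangian_deriv_eq (hα : 0 < α) (hβ : 0 < β) (hlam : 0 < lam) (hx : 0 ≤ x) :
    α / ((1 + α * x) * log 2) - β / ((1 + β * x) * log 2) - lam =
      lam * α * β * ((1 / (2 * β) - 1 / (2 * α)) ^ 2 + (1 / β - 1 / α) / (lam * log 2) -
        (x + 1 / (2 * β) + 1 / (2 * α)) ^ 2) / ((1 + α * x) * (1 + β * x)) := by
  have hαx : 1 + α * x ≠ 0 := by positivity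
  have hβx : 1 + β * x ≠ 0 := by positivity
  have hlog2 : log 2 ≠ 0 := (log_pos one_lt_two).ne'
  rw [div_sub_div _ _ (mul_ne_zero hαx hlog2) (mul_ne_zero hβx hlog2)]
  field_simp
  ring

theorem secrecyLagrangian_deriv_nonneg (hα : 0 < α) (hβ : 0 < β) (hlam : 0 < lam) (hx : 0 ≤ x)
    (hlt : x + 1 / (2 * β) + 1 / (2 * α) <
      √((1 / (2 * β) - 1 / (2 * α)) ^ 2 + (1 / β - 1 / α) / (lam * log 2))) :
    0 ≤ α / ((1 + α * x) * log 2) - β / ((1 + β * x) * log 2) - lam := by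
  rw [secrecyLagrangian_deriv_eq hα hβ hlam hx]
  have hsq := (lt_sqrt (by positivity)).1 hlt
  exact div_nonneg (mul_nonneg (by positivity) (sub_nonneg.2 hsq.le)) (by positivity)

theorem secrecyLagrangian_deriv_nonpos (hα : 0 < α) (hβ : 0 < β) (hlam : 0 < lam) (hx : 0 ≤ x)
    (hlt : √((1 / (2 * β) - 1 / (2 * α)) ^ 2 + (1 / β - 1 / α) / (lam * log 2)) <
      x + 1 / (2 * β) + 1 / (2 * α)) :
    α / ((1 + α * x) * log 2) - β / ((1 + β * x) * log 2) - lam ≤ 0 := by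
  rw [secrecyLagrangian_deriv_eq hα hβ hlam hx]
  have hsq := (sqrt_lt' (by positivity)).1 hlt
  exact div_nonpos_of_nonpos_of_nonneg
    (mul_nonpos_of_nonneg_of_nonpos (by positivity) (sub_nonpos.2 hsq.le)) (by positivity)

end DerivSign

/-- The clipped water-filling power `P* = min(max(P̂,0), P_peak)` maximizes the
Lagrangian `P ↦ log₂(1+αP) − log₂(1+βP) − λP` over `[0, P_peak]`. -/
theorem stmt_7 (α β lam Ppeak : ℝ) (hβ : 0 < β) (hαβ : β < α) (hlam : 0 < lam)
    (hPpeak : 0 < Ppeak) :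
    let Phat : ℝ :=
      Real.sqrt ((1 / (2 * β) - 1 / (2 * α)) ^ 2 + (1 / β - 1 / α) / (lam * Real.log 2)) -
        1 / (2 * β) - 1 / (2 * α)
    let Pstar : ℝ := min (max Phat 0) Ppeak
    Pstar ∈ Set.Icc (0 : ℝ) Ppeak ∧
    ∀ P ∈ Set.Icc (0 : ℝ) Ppeak,
      Real.logb 2 (1 + α * P) - Real.logb 2 (1 + β * P) - lam * P ≤
        Real.logb 2 (1 + α * Pstar) - Real.logb 2 (1 + β * Pstar) - lam * Pstar := by
  intro Phat Pstar
  have hα : 0 < α := hβ.trans hαβ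
  obtain ⟨hmem, hmax⟩ := isMaxOn_Icc_min_max_of_hasDerivAt_sign (c := Phat) hPpeak.le
    (fun x hx => hasDerivAt_secrecyLagrangian (lam := lam)
      (by have := hx.1; positivity) (by have := hx.1; positivity))
    (fun x hx hlt => secrecyLagrangian_deriv_nonneg hα hβ hlam hx.1.le
      (by linear_combination hlt))
    (fun x hx hlt => secrecyLagrangian_deriv_nonpos hα hβ hlam hx.1.le
      (by linear_combination hlt))
  exact ⟨hmem, fun P hP => hmax hP⟩
end

section
/- Let x, y, x_E, y_E, H, Q ∈ ℝ with Q ≥ 0, let t ∈ ℝ, and suppose there exists ξ ≥ 0 such that the real symmetric 3×3 matrix Φ with rows (ξ+1, 0, x_E−x), (0, ξ+1, y_E−y), (x_E−x, y_E−y, −Q²ξ + c), where c = (x−x_E)² + (y−y_E)² + H² − t, is positive semidefinite. Then for all (Δx, Δy) ∈ ℝ² with Δx² + Δy² ≤ Q², one has (x − x_E − Δx)² + (y − y_E − Δy)² + H² ≥ t. -/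
open Matrix

theorem dotProduct_mulVec_fin_three_of_scalar_block {R : Type*} [CommRing R] (a p q r u v : R) :
    ![u, v, 1] ⬝ᵥ (!![a, 0, p; 0, a, q; p, q, r] *ᵥ ![u, v, 1]) =
      a * (u ^ 2 + v ^ 2) + 2 * (p * u + q * v) + r := by
  simp only [dotProduct, mulVec, of_apply, cons_val', cons_val_fin_one, Fin.sum_univ_three,
    cons_val_zero, cons_val_one, cons_val]
  ring

-- The S-procedure certificate: the LMI evaluated at `(Δx, Δy, 1)` is the distance slack
-- plus `ξ` times the disk slack `Δx² + Δy² - Q²`, which is nonpositive on the disk.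
theorem stmt_10_general (x y xE yE H Q t : ℝ) (ξ : ℝ) (hξ : 0 ≤ ξ)
    (hΦ : Matrix.PosSemidef
      (!![ξ + 1, 0, xE - x;
          0, ξ + 1, yE - y;
          xE - x, yE - y,
            -Q ^ 2 * ξ + ((x - xE) ^ 2 + (y - yE) ^ 2 + H ^ 2 - t)] :
        Matrix (Fin 3) (Fin 3) ℝ)) :
    ∀ Δx Δy : ℝ, Δx ^ 2 + Δy ^ 2 ≤ Q ^ 2 →
      t ≤ (x - xE - Δx) ^ 2 + (y - yE - Δy) ^ 2 + H ^ 2 := by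
  intro Δx Δy hΔ
  have hform := hΦ.dotProduct_mulVec_nonneg ![Δx, Δy, 1]
  rw [star_trivial, dotProduct_mulVec_fin_three_of_scalar_block] at hform
  linear_combination hform + mul_nonneg hξ (sub_nonneg.mpr hΔ)

/-- Sufficiency of the S-procedure LMI: if `Φ(x, y, t, ξ)` is positive
semidefinite for some multiplier `ξ ≥ 0`, then the worst-case squared distance
constraint holds over the whole uncertainty disk of radius `Q`. -/
theorem stmt_10 (x y xE yE H Q t : ℝ) (hQ : 0 ≤ Q) (ξ : ℝ) (hξ : 0 ≤ ξ)
    (hΦ : Matrix.PosSemidef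
      (!![ξ + 1, 0, xE - x;
          0, ξ + 1, yE - y;
          xE - x, yE - y,
            -Q ^ 2 * ξ + ((x - xE) ^ 2 + (y - yE) ^ 2 + H ^ 2 - t)] :
        Matrix (Fin 3) (Fin 3) ℝ)) :
    ∀ Δx Δy : ℝ, Δx ^ 2 + Δy ^ 2 ≤ Q ^ 2 →
      t ≤ (x - xE - Δx) ^ 2 + (y - yE - Δy) ^ 2 + H ^ 2 :=
  stmt_10_general x y xE yE H Q t ξ hξ hΦ
end
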